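/- Robert's theorem: if F = Σ_{i=0}^m C(m,i) f_i Y_1^{m−i} Y_2^i is a covariant of order m with leading coefficient f_0, then f_i = D_2^i(f_0)/i! for all 0 ≤ i ≤ m; i.e. F = Σ_{i=0}^{m} (D_2^i(f_0)/i!) Y_1^{m−i} Y_2^i. -/

import Mathlib

open MvPolynomial

/-- Coefficient ring `ℂ[t, x_1, …, x_d]` (variable `0` is `t`). -/
abbrev R (d : ℕ) := MvPolynomial (Fin (d+1)) ℂ

/-- `ℂ[t, x_1, …, x_d][Y₁, Y₂]`, with `Y₁ = X 0`, `Y₂ = X 1` the outer variables. -/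
abbrev S (d : ℕ) := MvPolynomial (Fin 2) (R d)

open Fin.NatCast in
/-- `D₁ = Σ_{j=1}^{d} j·x_{j-1}·∂/∂x_j` (with `x_0 := t`). -/
noncomputable def D1 (d : ℕ) (f : R d) : R d :=
  ∑ j ∈ Finset.range d, (((j+1 : ℕ)) : ℂ) •
    (X ((j : ℕ) : Fin (d+1)) * pderiv (((j+1 : ℕ)) : Fin (d+1)) f)

open Fin.NatCast in
/-- `D₂ = d·x₁·∂/∂t + Σ_{j=1}^{d-1} (d-j)·x_{j+1}·∂/∂x_j`. -/
noncomputable def D2 (d : ℕ) (f : R d) : R d :=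
  (d : ℂ) • (X 1 * pderiv 0 f) +
  ∑ j ∈ Finset.range (d-1), (((d - (j+1) : ℕ)) : ℂ) •
    (X (((j+2 : ℕ)) : Fin (d+1)) * pderiv (((j+1 : ℕ)) : Fin (d+1)) f)

/-- Coefficientwise application of an operator on `R d` to an element of `S d`. -/
noncomputable def liftC (d : ℕ) (D : R d → R d) (f : S d) : S d :=
  ∑ m ∈ f.support, MvPolynomial.monomial m (D (MvPolynomial.coeff m f))

/-- The covariance operator `D₁ - Y₂ ∂/∂Y₁`. -/
noncomputable def V1 (d : ℕ) (f : S d) : S d :=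
  liftC d (D1 d) f - X 1 * pderiv (0 : Fin 2) f

/-- The covariance operator `D₂ - Y₁ ∂/∂Y₂`. -/
noncomputable def V2 (d : ℕ) (f : S d) : S d :=
  liftC d (D2 d) f - X 0 * pderiv (1 : Fin 2) f

/-!
Write `F = Σ gᵢ Y₁^{m-i} Y₂^i` with `gᵢ = C(m,i) fᵢ`. Comparing the coefficients of
`Y₁^{m-j} Y₂^j` in `D₂ F = Y₁ ∂F/∂Y₂` gives `D₂ gⱼ = (j+1) g_{j+1}` for `j < m`, and this
recursion forces `gⱼ = D₂^j(g₀)/j!`, where `g₀ = f₀`.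
-/

lemma D2_smul (d : ℕ) (c : ℂ) (x : R d) : D2 d (c • x) = c • D2 d x := by
  simp [D2, smul_comm c, Finset.smul_sum, smul_add]

lemma D2_zero (d : ℕ) : D2 d 0 = 0 := by
  simpa using D2_smul d 0 0

lemma coeff_liftC (d : ℕ) {D : R d → R d} (hD : D 0 = 0) (f : S d) (n : Fin 2 →₀ ℕ) :
    coeff n (liftC d D f) = D (coeff n f) := by
  rw [liftC, coeff_sum]
  simp only [coeff_monomial, Finset.sum_ite_eq']
  split_ifs with h
  · rfl
  · rw [notMem_support_iff.mp h, hD]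

/-- The exponent of `Y₁^a Y₂^b`. -/
noncomputable def expo (a b : ℕ) : Fin 2 →₀ ℕ := Finsupp.single 0 a + Finsupp.single 1 b

lemma expo_eq_expo_iff {a b a' b' : ℕ} : expo a b = expo a' b' ↔ a = a' ∧ b = b' := by
  refine ⟨fun h => ?_, fun ⟨ha, hb⟩ => ha ▸ hb ▸ rfl⟩
  have h0 := DFunLike.congr_fun h 0
  have h1 := DFunLike.congr_fun h 1
  simp only [expo, Finsupp.add_apply, Finsupp.single_apply] at h0 h1
  simp_all

lemma C_mul_X_pow_mul_X_pow {d : ℕ} (r : R d) (a b : ℕ) :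
    (C r * X 0 ^ a * X 1 ^ b : S d) = monomial (expo a b) r := by
  simp only [X_pow_eq_monomial, C_apply, monomial_mul, expo, mul_one, zero_add]

lemma X_zero_mul_pderiv_one_monomial {d : ℕ} (r : R d) (a b : ℕ) :
    (X 0 * pderiv 1 (monomial (expo a b) r) : S d)
      = monomial (expo (a + 1) (b - 1)) (r * b) := by
  have hb : expo a b 1 = b := by simp [expo]
  have hexp : Finsupp.single 0 1 + (expo a b - Finsupp.single 1 1) = expo (a + 1) (b - 1) := by
    ext x
    fin_cases x <;> simp [expo]
    omega
  rw [pderiv_monomial, hb, X, monomial_mul, one_mul, hexp]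

noncomputable def binaryForm (d m : ℕ) (g : ℕ → R d) : S d :=
  ∑ i ∈ Finset.range (m + 1), monomial (expo (m - i) i) (g i)

lemma coeff_binaryForm {d m j : ℕ} (g : ℕ → R d) (hj : j ≤ m) :
    coeff (expo (m - j) j) (binaryForm d m g) = g j := by
  rw [binaryForm, coeff_sum, Finset.sum_eq_single j]
  · simp
  · intro i _ hij
    rw [coeff_monomial, if_neg fun h => hij (expo_eq_expo_iff.mp h).2]
  · intro h
    simp at h
    omega

lemma coeff_X_zero_mul_pderiv_one_binaryForm {d m j : ℕ} (g : ℕ → R d) (hj : j < m) :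
    coeff (expo (m - j) j) (X 0 * pderiv 1 (binaryForm d m g))
      = ((j + 1 : ℕ) : ℂ) • g (j + 1) := by
  rw [binaryForm, map_sum, Finset.mul_sum, coeff_sum, Finset.sum_eq_single (j + 1)]
  · rw [X_zero_mul_pderiv_one_monomial, coeff_monomial,
      if_pos (expo_eq_expo_iff.mpr ⟨by omega, by omega⟩), smul_eq_C_mul, mul_comm]
    rfl
  · intro i hi hij
    rw [X_zero_mul_pderiv_one_monomial, coeff_monomial, if_neg]
    intro h
    obtain ⟨ha, hb⟩ := expo_eq_expo_iff.mp h
    simp at hi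
    omega
  · intro h
    simp at h
    omega

lemma D2_eq_succ_smul_of_V2_binaryForm_eq_zero {d m : ℕ} {g : ℕ → R d}
    (h : V2 d (binaryForm d m g) = 0) {j : ℕ} (hj : j < m) :
    D2 d (g j) = ((j + 1 : ℕ) : ℂ) • g (j + 1) := by
  have hcoeff := congrArg (coeff (expo (m - j) j)) (sub_eq_zero.mp h)
  rwa [coeff_liftC d (D2_zero d), coeff_binaryForm g hj.le,
    coeff_X_zero_mul_pderiv_one_binaryForm g hj] at hcoeff

lemma eq_inv_factorial_smul_iterate {K M : Type*} [Field K] [CharZero K] [AddCommGroup M]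
    [Module K M] {D : M → M} (hD : ∀ (c : K) x, D (c • x) = c • D x) {g : ℕ → M} {m : ℕ}
    (hg : ∀ j < m, D (g j) = ((j + 1 : ℕ) : K) • g (j + 1)) :
    ∀ j ≤ m, g j = ((j.factorial : K))⁻¹ • D^[j] (g 0)
  | 0, _ => by simp
  | j + 1, hj => by
    have hne : ((j + 1 : ℕ) : K) ≠ 0 := Nat.cast_ne_zero.mpr j.succ_ne_zero
    calc g (j + 1) = ((j + 1 : ℕ) : K)⁻¹ • D (g j) := by
          rw [hg j hj, inv_smul_smul₀ hne]
      _ = ((j + 1).factorial : K)⁻¹ • D^[j + 1] (g 0) := by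
          rw [eq_inv_factorial_smul_iterate hD hg j (by omega), hD, smul_smul,
            Function.iterate_succ_apply', Nat.factorial_succ, Nat.cast_mul, mul_inv]

theorem stmt13_general (d : ℕ) (m : ℕ) (f : ℕ → R d)
    (F : S d)
    (hF : F = ∑ i ∈ Finset.range (m+1), ((m.choose i : ℂ)) •
        (MvPolynomial.C (f i) * X 0 ^ (m-i) * X 1 ^ i))
    (h2 : V2 d F = 0) :
    F = ∑ i ∈ Finset.range (m+1), ((Nat.factorial i : ℂ))⁻¹ •
        (MvPolynomial.C ((D2 d)^[i] (f 0)) * X 0 ^ (m-i) * X 1 ^ i) := by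
  set g : ℕ → R d := fun i => (m.choose i : ℂ) • f i
  have hFg : F = binaryForm d m g := by
    simp only [hF, binaryForm, C_mul_X_pow_mul_X_pow, smul_monomial, g]
  have hg := eq_inv_factorial_smul_iterate (D2_smul d)
    (fun _ => D2_eq_succ_smul_of_V2_binaryForm_eq_zero (hFg ▸ h2))
  have hg0 : g 0 = f 0 := by simp [g]
  rw [hFg, binaryForm]
  refine Finset.sum_congr rfl fun i hi => ?_
  rw [C_mul_X_pow_mul_X_pow, smul_monomial, hg i (Finset.mem_range_succ_iff.mp hi), hg0]

/-- Robert's theorem: a covariant `F = Σ C(m,i) fᵢ Y₁^{m-i} Y₂^i` of order `m` is determined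
by its leading coefficient `f₀`, namely `F = Σ (D₂^i(f₀)/i!) Y₁^{m-i} Y₂^i`. -/
theorem stmt13 (d : ℕ) (hd : 1 ≤ d) (m : ℕ) (f : ℕ → R d)
    (F : S d)
    (hF : F = ∑ i ∈ Finset.range (m+1), ((m.choose i : ℂ)) •
        (MvPolynomial.C (f i) * X 0 ^ (m-i) * X 1 ^ i))
    (h1 : V1 d F = 0) (h2 : V2 d F = 0) :
    F = ∑ i ∈ Finset.range (m+1), ((Nat.factorial i : ℂ))⁻¹ •
        (MvPolynomial.C ((D2 d)^[i] (f 0)) * X 0 ^ (m-i) * X 1 ^ i) :=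
  stmt13_general d m f F hF h2
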